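/- The separation property for distributed bisimilarity in microCCS with choice: if P = ∏ᵢ∈I Sᵢ and Q = ∏ⱼ∈J S'ⱼ are parallel products of sum terms none of which is distributedly bisimilar to 0, and P is distributedly bisimilar to Q, then there exists a bijection f : I → J with Sᵢ distributedly bisimilar to S'_{f(i)} for all i ∈ I. -/

import Mathlib

/-- CCS visible actions: a name `a` or a coname `ā`. -/
inductive Act where
  | inp : ℕ → Act
  | out : ℕ → Act
deriving DecidableEq

/-- The coaction. -/
def Act.co : Act → Act
  | .inp a => .out a
  | .out a => .inp a

/-- Transition labels. -/
inductive Lab where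
  | act : Act → Lab
  | tau : Lab
deriving DecidableEq

mutual
/-- Guarded sums of microCCS with choice: S ::= 0 | η.P | S + S. -/
inductive SP where
  | nil : SP
  | pre : Act → PP → SP
  | sum : SP → SP → SP
/-- Processes of microCCS with choice: P ::= S | P ‖ P. -/
inductive PP where
  | ofS : SP → PP
  | par : PP → PP → PP
end

/-- Transitions of sum terms. -/
inductive SStep : SP → Act → PP → Prop where
  | pre (η P) : SStep (.pre η P) η P
  | sumL : SStep S η P → SStep (.sum S S') η P
  | sumR : SStep S' η P → SStep (.sum S S') η P

/-- The standard CCS transition system on microCCS with choice. -/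
inductive PStep : PP → Lab → PP → Prop where
  | ofS {S : SP} {η : Act} {P : PP} : SStep S η P → PStep (.ofS S) (.act η) P
  | syn {P P' Q Q' : PP} {η : Act} :
      PStep P (.act η) P' → PStep Q (.act η.co) Q' →
      PStep (.par P Q) .tau (.par P' Q')
  | parL (Q) : PStep P μ P' → PStep (.par P Q) μ (.par P' Q)
  | parR (P) : PStep Q μ Q' → PStep (.par P Q) μ (.par P Q')

/-- A (symmetric) strong bisimulation on microCCS with choice. -/
def IsPBisim (R : PP → PP → Prop) : Prop :=
  (∀ P Q, R P Q → R Q P) ∧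
  ∀ P Q μ P', R P Q → PStep P μ P' → ∃ Q', PStep Q μ Q' ∧ R P' Q'

/-- Strong bisimilarity on microCCS with choice. -/
def PBisim (P Q : PP) : Prop := ∃ R, IsPBisim R ∧ R P Q

/-- Distributed transitions `P --μ-->_d ⟨P₁, P₂⟩`, with local residual `P₁`
    and concurrent residual `P₂`. -/
inductive DStep : PP → Lab → PP → PP → Prop where
  | ofS {S : SP} {η : Act} {P : PP} :
      SStep S η P → DStep (.ofS S) (.act η) P (.ofS .nil)
  | parL {P P₁ P₂ : PP} {μ : Lab} (P' : PP) :
      DStep P μ P₁ P₂ → DStep (.par P P') μ P₁ (.par P₂ P')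
  | parR {P' P₁ P₂ : PP} {μ : Lab} (P : PP) :
      DStep P' μ P₁ P₂ → DStep (.par P P') μ P₁ (.par P P₂)
  | syn {P Q P₁ P₂ Q₁ Q₂ : PP} {η : Act} :
      DStep P (.act η) P₁ P₂ → DStep Q (.act η.co) Q₁ Q₂ →
      DStep (.par P Q) .tau (.par P₁ Q₁) (.par P₂ Q₂)

/-- A (symmetric) distributed bisimulation. -/
def IsDBisim (R : PP → PP → Prop) : Prop :=
  (∀ P Q, R P Q → R Q P) ∧
  ∀ P Q μ P₁ P₂, R P Q → DStep P μ P₁ P₂ →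
    ∃ Q₁ Q₂, DStep Q μ Q₁ Q₂ ∧ R P₁ Q₁ ∧ R P₂ Q₂

/-- Distributed bisimilarity. -/
def DBisim (P Q : PP) : Prop := ∃ R, IsDBisim R ∧ R P Q

/-- The parallel product of a list of sum terms. -/
def prodS (l : List SP) : PP := (l.map PP.ofS).foldr PP.par (.ofS .nil)

/-! Separation holds because bisimilar products have the same multiset of bisimilarity classes of
non-nil components. A visible step of a component `S` of the left product is matched by a step of
some component `T` of the right product, and the two residual products, which have one non-nil
component fewer, are again bisimilar, so by induction on the number of non-nil components their
class multisets agree. Cancelling that common multiset shows that every component able to match a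
step of `S` is bisimilar to `T`, and symmetrically; hence `S` and `T` simulate each other, and
their classes agree. -/

theorem DBisim.refl (P : PP) : DBisim P P :=
  ⟨Eq, ⟨fun _ _ h => h.symm, fun _ _ _ P₁ P₂ h hs => h ▸ ⟨P₁, P₂, hs, rfl, rfl⟩⟩, rfl⟩

theorem DBisim.symm {P Q : PP} (h : DBisim P Q) : DBisim Q P :=
  let ⟨R, hR, hPQ⟩ := h
  ⟨R, hR, hR.1 _ _ hPQ⟩

theorem DBisim.exists_dstep {P Q P₁ P₂ : PP} {μ : Lab} (h : DBisim P Q)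
    (hs : DStep P μ P₁ P₂) : ∃ Q₁ Q₂, DStep Q μ Q₁ Q₂ ∧ DBisim P₁ Q₁ ∧ DBisim P₂ Q₂ :=
  let ⟨R, hR, hPQ⟩ := h
  let ⟨Q₁, Q₂, hs', h₁, h₂⟩ := hR.2 _ _ _ _ _ hPQ hs
  ⟨Q₁, Q₂, hs', ⟨R, hR, h₁⟩, ⟨R, hR, h₂⟩⟩

theorem DBisim.of_progress (R : PP → PP → Prop) (hsymm : ∀ P Q, R P Q → R Q P)
    (hstep : ∀ P Q μ P₁ P₂, R P Q → DStep P μ P₁ P₂ →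
      ∃ Q₁ Q₂, DStep Q μ Q₁ Q₂ ∧ DBisim P₁ Q₁ ∧ DBisim P₂ Q₂)
    {P Q : PP} (hPQ : R P Q) : DBisim P Q := by
  refine ⟨fun X Y => R X Y ∨ DBisim X Y, ⟨?_, ?_⟩, .inl hPQ⟩
  · rintro X Y (hXY | hXY)
    exacts [.inl (hsymm _ _ hXY), .inr hXY.symm]
  · rintro X Y μ X₁ X₂ (hXY | hXY) hs
    · obtain ⟨Y₁, Y₂, hs', h₁, h₂⟩ := hstep _ _ _ _ _ hXY hs
      exact ⟨Y₁, Y₂, hs', .inr h₁, .inr h₂⟩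
    · obtain ⟨Y₁, Y₂, hs', h₁, h₂⟩ := hXY.exists_dstep hs
      exact ⟨Y₁, Y₂, hs', .inr h₁, .inr h₂⟩

theorem DBisim.trans {P Q R : PP} (hPQ : DBisim P Q) (hQR : DBisim Q R) : DBisim P R := by
  refine ⟨fun X Z => ∃ Y, DBisim X Y ∧ DBisim Y Z,
    ⟨fun X Z ⟨Y, hXY, hYZ⟩ => ⟨Y, hYZ.symm, hXY.symm⟩, ?_⟩, Q, hPQ, hQR⟩
  rintro X Z μ X₁ X₂ ⟨Y, hXY, hYZ⟩ hs
  obtain ⟨Y₁, Y₂, hs', hX₁, hX₂⟩ := hXY.exists_dstep hs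
  obtain ⟨Z₁, Z₂, hs'', hY₁, hY₂⟩ := hYZ.exists_dstep hs'
  exact ⟨Z₁, Z₂, hs'', ⟨Y₁, hX₁, hY₁⟩, ⟨Y₂, hX₂, hY₂⟩⟩

theorem not_dstep_nil {μ : Lab} {P₁ P₂ : PP} : ¬ DStep (.ofS .nil) μ P₁ P₂ := by
  rintro ⟨⟨⟩⟩

theorem dbisim_ofS_of_forall_sstep {A B : SP}
    (hAB : ∀ η P, SStep A η P → ∃ P', SStep B η P' ∧ DBisim P P')
    (hBA : ∀ η P, SStep B η P → ∃ P', SStep A η P' ∧ DBisim P P') :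
    DBisim (.ofS A) (.ofS B) := by
  refine DBisim.of_progress
    (fun X Y => (X = .ofS A ∧ Y = .ofS B) ∨ (X = .ofS B ∧ Y = .ofS A))
    (fun X Y hXY => hXY.symm.imp And.symm And.symm) ?_ (.inl ⟨rfl, rfl⟩)
  rintro X Y μ X₁ X₂ (⟨rfl, rfl⟩ | ⟨rfl, rfl⟩) ⟨hS⟩
  · obtain ⟨P', hS', hP⟩ := hAB _ _ hS
    exact ⟨P', _, .ofS hS', hP, .refl _⟩
  · obtain ⟨P', hS', hP⟩ := hBA _ _ hS
    exact ⟨P', _, .ofS hS', hP, .refl _⟩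

theorem DBisim.exists_sstep_ofS {A B : SP} {η : Act} {P : PP} (h : DBisim (.ofS A) (.ofS B))
    (hS : SStep A η P) : ∃ P', SStep B η P' ∧ DBisim P P' := by
  obtain ⟨P', _, ⟨hS'⟩, hP, -⟩ := h.exists_dstep (.ofS hS)
  exact ⟨P', hS', hP⟩

theorem dbisim_nil_iff_forall_not_sstep {S : SP} :
    DBisim (.ofS S) (.ofS .nil) ↔ ∀ η P, ¬ SStep S η P := by
  refine ⟨fun h η P hS => ?_, fun h => dbisim_ofS_of_forall_sstep ?_ ?_⟩
  · obtain ⟨P', hS', -⟩ := h.exists_sstep_ofS hS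
    cases hS'
  · exact fun η P hS => absurd hS (h η P)
  · rintro η P ⟨⟩

theorem dstep_prodS_iff {l : List SP} {η : Act} {P₁ P₂ : PP} :
    DStep (prodS l) (.act η) P₁ P₂ ↔
      ∃ j : Fin l.length, SStep l[j] η P₁ ∧ P₂ = prodS (l.set j .nil) := by
  induction l generalizing P₂ with
  | nil => simpa [prodS] using not_dstep_nil
  | cons S l ih =>
    change DStep (.par (.ofS S) (prodS l)) _ _ _ ↔ _
    constructor
    · intro hs
      cases hs with
      | parL _ hs =>
        obtain ⟨hS⟩ := hs
        exact ⟨0, hS, rfl⟩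
      | parR _ hs =>
        obtain ⟨j, hS, rfl⟩ := ih.mp hs
        exact ⟨j.succ, hS, rfl⟩
    · rintro ⟨j, hS, rfl⟩
      cases j using Fin.cases with
      | zero => exact .parL _ (.ofS hS)
      | succ j => exact .parR _ (ih.mpr ⟨j, hS, rfl⟩)

theorem DBisim.exists_sstep_prodS {l₁ l₂ : List SP} (h : DBisim (prodS l₁) (prodS l₂))
    {i : Fin l₁.length} {η : Act} {P : PP} (hS : SStep l₁[i] η P) :
    ∃ (j : Fin l₂.length) (P' : PP), SStep l₂[j] η P' ∧ DBisim P P' ∧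
      DBisim (prodS (l₁.set i .nil)) (prodS (l₂.set j .nil)) := by
  obtain ⟨Q₁, Q₂, hs, hP, hrest⟩ := h.exists_dstep (dstep_prodS_iff.mpr ⟨i, hS, rfl⟩)
  obtain ⟨j, hS', rfl⟩ := dstep_prodS_iff.mp hs
  exact ⟨j, Q₁, hS', hP, hrest⟩

instance SP.dbisimSetoid : Setoid SP where
  r A B := DBisim (.ofS A) (.ofS B)
  iseqv := ⟨fun _ => .refl _, .symm, .trans⟩

def SP.bisimClass (S : SP) : Quotient SP.dbisimSetoid := ⟦S⟧

theorem SP.bisimClass_eq_iff {S T : SP} :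
    S.bisimClass = T.bisimClass ↔ DBisim (.ofS S) (.ofS T) :=
  Quotient.eq

theorem SP.bisimClass_ne_nil_iff {S : SP} :
    S.bisimClass ≠ SP.nil.bisimClass ↔ ∃ η P, SStep S η P := by
  simpa [SP.bisimClass_eq_iff] using dbisim_nil_iff_forall_not_sstep.not

theorem SStep.bisimClass_ne_nil {S : SP} {η : Act} {P : PP} (hS : SStep S η P) :
    S.bisimClass ≠ SP.nil.bisimClass :=
  SP.bisimClass_ne_nil_iff.mpr ⟨η, P, hS⟩

open Classical in
noncomputable def nonNilClasses (l : List SP) : Multiset (Quotient SP.dbisimSetoid) :=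
  (l.map SP.bisimClass : Multiset _).filter (· ≠ SP.nil.bisimClass)

theorem nonNilClasses_eq_cons_set_nil (l : List SP) (j : Fin l.length)
    (hj : l[j].bisimClass ≠ SP.nil.bisimClass) :
    nonNilClasses l = l[j].bisimClass ::ₘ nonNilClasses (l.set j .nil) := by
  have hl : (l.map SP.bisimClass : Multiset _) =
      l[j].bisimClass ::ₘ (l.eraseIdx j).map SP.bisimClass :=
    Multiset.coe_eq_coe.mpr ((List.getElem_cons_eraseIdx_perm j.isLt).map _).symm
  have hset : ((l.set j .nil).map SP.bisimClass : Multiset _) =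
      SP.nil.bisimClass ::ₘ (l.eraseIdx j).map SP.bisimClass :=
    Multiset.coe_eq_coe.mpr ((List.set_perm_cons_eraseIdx j.isLt _).map _)
  classical
  rw [nonNilClasses, nonNilClasses, hl, hset,
    Multiset.filter_cons_of_pos (p := (· ≠ SP.nil.bisimClass)) _ hj,
    Multiset.filter_cons_of_neg (p := (· ≠ SP.nil.bisimClass)) _ (not_not.mpr rfl)]

theorem exists_bisimClass_ne_nil_of_nonNilClasses_ne_zero {l : List SP}
    (hl : nonNilClasses l ≠ 0) : ∃ i : Fin l.length, l[i].bisimClass ≠ SP.nil.bisimClass := by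
  obtain ⟨c, hc⟩ := Multiset.exists_mem_of_ne_zero hl
  classical
  obtain ⟨hmem, hc⟩ := Multiset.mem_filter.mp hc
  obtain ⟨S, hS, rfl⟩ := List.mem_map.mp (Multiset.mem_coe.mp hmem)
  obtain ⟨i, rfl⟩ := List.mem_iff_get.mp hS
  exact ⟨i, hc⟩

theorem nonNilClasses_eq_map {l : List SP} (hl : ∀ S ∈ l, ¬ DBisim (.ofS S) (.ofS .nil)) :
    nonNilClasses l = (l.map SP.bisimClass : Multiset _) := by
  classical
  refine Multiset.filter_eq_self.mpr fun c hc => ?_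
  obtain ⟨S, hS, rfl⟩ := List.mem_map.mp (Multiset.mem_coe.mp hc)
  exact mt SP.bisimClass_eq_iff.mp (hl S hS)

/-- The induction hypothesis of `nonNilClasses_eq_of_dbisim`. -/
def ResiduesCancel (l₁ l₂ : List SP) : Prop :=
  ∀ (i : Fin l₁.length) (j : Fin l₂.length),
    l₁[i].bisimClass ≠ SP.nil.bisimClass → l₂[j].bisimClass ≠ SP.nil.bisimClass →
    DBisim (prodS (l₁.set i .nil)) (prodS (l₂.set j .nil)) →
    nonNilClasses (l₁.set i .nil) = nonNilClasses (l₂.set j .nil)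

theorem ResiduesCancel.symm {l₁ l₂ : List SP} (H : ResiduesCancel l₁ l₂) :
    ResiduesCancel l₂ l₁ :=
  fun j i hj hi hrest => (H i j hi hj hrest.symm).symm

/-- A step of `l₁[i]` is matched by some `l₂[j']` with bisimilar residual products; when these
residuals cancel, `l₂[j']` and `l₂[j]` have the same class, so `l₂[j]` matches the step too. -/
theorem ResiduesCancel.exists_sstep {l₁ l₂ : List SP} (h : DBisim (prodS l₁) (prodS l₂))
    (H : ResiduesCancel l₁ l₂) {i : Fin l₁.length} {j : Fin l₂.length}
    (hij : nonNilClasses (l₁.set i .nil) = nonNilClasses (l₂.set j .nil))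
    (hj : l₂[j].bisimClass ≠ SP.nil.bisimClass) {η : Act} {P : PP} (hS : SStep l₁[i] η P) :
    ∃ P', SStep l₂[j] η P' ∧ DBisim P P' := by
  obtain ⟨j', P', hS', hP, hrest⟩ := h.exists_sstep_prodS hS
  have hj' := hS'.bisimClass_ne_nil
  have hcls : l₂[j'].bisimClass = l₂[j].bisimClass := by
    refine (Multiset.cons_inj_left (nonNilClasses (l₂.set j .nil))).mp ?_
    rw [← nonNilClasses_eq_cons_set_nil _ _ hj, ← hij, H i j' hS.bisimClass_ne_nil hj' hrest,
      ← nonNilClasses_eq_cons_set_nil _ _ hj']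
  obtain ⟨P'', hS'', hP'⟩ := (SP.bisimClass_eq_iff.mp hcls).exists_sstep_ofS hS'
  exact ⟨P'', hS'', hP.trans hP'⟩

theorem ResiduesCancel.nonNilClasses_eq {l₁ l₂ : List SP} (h : DBisim (prodS l₁) (prodS l₂))
    (H : ResiduesCancel l₁ l₂) {i : Fin l₁.length}
    (hi : l₁[i].bisimClass ≠ SP.nil.bisimClass) : nonNilClasses l₁ = nonNilClasses l₂ := by
  obtain ⟨η, P, hS⟩ := SP.bisimClass_ne_nil_iff.mp hi
  obtain ⟨j, _, hS', -, hrest⟩ := h.exists_sstep_prodS hS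
  have hj := hS'.bisimClass_ne_nil
  have hij := H i j hi hj hrest
  have hcls : l₁[i].bisimClass = l₂[j].bisimClass :=
    SP.bisimClass_eq_iff.mpr <| dbisim_ofS_of_forall_sstep
      (fun _ _ => H.exists_sstep h hij hj) (fun _ _ => H.symm.exists_sstep h.symm hij.symm hi)
  rw [nonNilClasses_eq_cons_set_nil _ _ hi, nonNilClasses_eq_cons_set_nil _ _ hj, hcls, hij]

theorem nonNilClasses_eq_of_dbisim {l₁ l₂ : List SP} (h : DBisim (prodS l₁) (prodS l₂)) :
    nonNilClasses l₁ = nonNilClasses l₂ := by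
  induction hN : Multiset.card (nonNilClasses l₁) + Multiset.card (nonNilClasses l₂)
    using Nat.strong_induction_on generalizing l₁ l₂ with
  | _ N ih =>
  have H : ResiduesCancel l₁ l₂ := by
    intro i j hi hj hrest
    refine ih _ ?_ hrest rfl
    rw [← hN, nonNilClasses_eq_cons_set_nil _ _ hi, nonNilClasses_eq_cons_set_nil l₂ _ hj,
      Multiset.card_cons, Multiset.card_cons]
    omega
  rcases eq_or_ne (nonNilClasses l₁) 0 with h₁ | h₁
  · rcases eq_or_ne (nonNilClasses l₂) 0 with h₂ | h₂
    · rw [h₁, h₂]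
    · obtain ⟨j, hj⟩ := exists_bisimClass_ne_nil_of_nonNilClasses_ne_zero h₂
      exact (H.symm.nonNilClasses_eq h.symm hj).symm
  · obtain ⟨i, hi⟩ := exists_bisimClass_ne_nil_of_nonNilClasses_ne_zero h₁
    exact H.nonNilClasses_eq h hi

theorem exists_equiv_comp_eq_of_map_univ_eq {α β γ : Type*} [Fintype α] [Fintype β]
    {f : α → γ} {g : β → γ} (h : Finset.univ.val.map f = Finset.univ.val.map g) :
    ∃ e : α ≃ β, ∀ a, g (e a) = f a := by
  classical
  have hcard (c : γ) : Fintype.card {a // f a = c} = Fintype.card {b // g b = c} := by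
    simpa [Fintype.card_subtype, Multiset.count_map, Finset.card_def, eq_comm] using
      congr_arg (Multiset.count c) h
  exact ⟨Equiv.ofFiberEquiv fun c => Fintype.equivOfCardEq (hcard c), Equiv.ofFiberEquiv_map _⟩

theorem List.exists_equiv_getElem_eq_of_perm_map {α β γ : Type*} {l₁ : List α} {l₂ : List β}
    {f : α → γ} {g : β → γ} (h : (l₁.map f).Perm (l₂.map g)) :
    ∃ e : Fin l₁.length ≃ Fin l₂.length, ∀ i, g l₂[e i] = f l₁[i] :=
  exists_equiv_comp_eq_of_map_univ_eq (f := fun i => f l₁[i]) (g := fun j => g l₂[j]) <| by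
    simpa [Fin.univ_val_map, List.ofFn_getElem_eq_map] using h

/-- separation property for distributed bisimilarity: two
    distributedly bisimilar parallel products of non-null sum terms have
    their components in pairwise distributedly bisimilar one-to-one
    correspondence. -/
theorem separation_property (l₁ l₂ : List SP)
    (h₁ : ∀ S ∈ l₁, ¬ DBisim (.ofS S) (.ofS .nil))
    (h₂ : ∀ S ∈ l₂, ¬ DBisim (.ofS S) (.ofS .nil))
    (h : DBisim (prodS l₁) (prodS l₂)) :
    ∃ e : Fin l₁.length ≃ Fin l₂.length,
      ∀ i : Fin l₁.length, DBisim (.ofS (l₁.get i)) (.ofS (l₂.get (e i))) := by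
  have hcls := nonNilClasses_eq_of_dbisim h
  rw [nonNilClasses_eq_map h₁, nonNilClasses_eq_map h₂, Multiset.coe_eq_coe] at hcls
  obtain ⟨e, he⟩ := List.exists_equiv_getElem_eq_of_perm_map hcls
  exact ⟨e, fun i => SP.bisimClass_eq_iff.mp (he i).symm⟩
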